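/- For every ε ∈ (0, 1/2) there exists n0 ∈ ℕ such that for all integers n ≥ n0 and N ≥ 4n the following holds. Let X ~ Binomial(n, 1/2 − ε) and Y ~ Binomial((N−1)·n, 1/2) be independent, representing respectively the number of (1−y*)-labels in the biased source dataset and in the N−1 unbiased source datasets. Then P(X + Y ≥ nN/2) ≥ 1/10. Consequently, the pooled empirical risk minimizer ĥ_pool (which outputs the minority-optimal hypothesis h_{1−y*} whenever the number of (1−y*)-labels is at least the number of y*-labels among all nN pooled labels) satisfies E[E_D(ĥ_pool)] ≥ ε/5, where the target D = P has excess risk E_D(h_{1−y*}) = 2ε. -/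
import Mathlib


/-- The probability mass function of the Binomial(n, p) distribution at `k`. -/
noncomputable def binomPMF (n : ℕ) (p : ℝ) (k : ℕ) : ℝ :=
  (n.choose k : ℝ) * p ^ k * (1 - p) ^ (n - k)

/-- `P(X + Y ≥ nN/2)` where `X ~ Binomial(n, 1/2 − ε)` and
`Y ~ Binomial((N−1)·n, 1/2)` are independent: the probability that the pooled
count of wrong labels reaches half of all `nN` labels. -/
noncomputable def poolErrProb (n N : ℕ) (ε : ℝ) : ℝ :=
  ∑ j ∈ Finset.range (n+1), ∑ k ∈ Finset.range ((N-1)*n+1),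
    if n*N ≤ 2*(j+k) then binomPMF n (1/2 - ε) j * binomPMF ((N-1)*n) (1/2) k else 0




open Finset

lemma centralsq (k : ℕ) : (Nat.centralBinom k)^2 * (3*k+1) ≤ 16^k := by
  induction k with
  | zero => simp [Nat.centralBinom]
  | succ k ih =>
    have h := Nat.succ_mul_centralBinom_succ k
    set C := Nat.centralBinom k with hC
    set C' := Nat.centralBinom (k+1) with hC'
    have key : (k+1)^2 * (C'^2 * (3*(k+1)+1)) ≤ (k+1)^2 * 16^(k+1) := by
      have e0 : (k+1)^2 * C'^2 = 4*(2*k+1)^2 * C^2 := by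
        have : ((k+1)*C')^2 = (2*(2*k+1)*C)^2 := by rw [h]
        calc (k+1)^2 * C'^2 = ((k+1)*C')^2 := by ring
          _ = (2*(2*k+1)*C)^2 := this
          _ = 4*(2*k+1)^2 * C^2 := by ring
      have e : (k+1)^2 * (C'^2 * (3*(k+1)+1)) = (4*(2*k+1)^2*(3*k+4)) * C^2 := by
        calc (k+1)^2 * (C'^2 * (3*(k+1)+1)) = ((k+1)^2 * C'^2) * (3*k+4) := by ring
          _ = (4*(2*k+1)^2 * C^2) * (3*k+4) := by rw [e0]
          _ = (4*(2*k+1)^2*(3*k+4)) * C^2 := by ring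
      rw [e]
      have hpoly : 4*(2*k+1)^2*(3*k+4) ≤ 16*(k+1)^2*(3*k+1) := by nlinarith
      calc (4*(2*k+1)^2*(3*k+4)) * C^2 ≤ (16*(k+1)^2*(3*k+1)) * C^2 :=
            Nat.mul_le_mul_right _ hpoly
        _ = (16*(k+1)^2) * (C^2 * (3*k+1)) := by ring
        _ ≤ (16*(k+1)^2) * 16^k := Nat.mul_le_mul_left _ ih
        _ = (k+1)^2 * 16^(k+1) := by ring
    exact Nat.le_of_mul_le_mul_left key (by positivity)

lemma middle_sq (m n : ℕ) (hn : 1 ≤ n) (hm : 3*n^2 ≤ m) :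
    4*n^2 * (m.choose (m/2))^2 ≤ 4^m := by
  have hn2 : 1 ≤ n^2 := Nat.one_le_pow _ _ (by omega)
  rcases Nat.even_or_odd m with ⟨k0, hk0⟩ | ⟨k0, hk0⟩
  · subst hk0
    have hdiv : (k0 + k0) / 2 = k0 := by omega
    rw [hdiv]
    have hc : (k0+k0).choose k0 = Nat.centralBinom k0 := by
      rw [Nat.centralBinom]; congr 1; omega
    rw [hc]
    have h1 : 4*n^2 ≤ 3*k0+1 := by nlinarith
    calc 4*n^2 * (Nat.centralBinom k0)^2 ≤ (3*k0+1) * (Nat.centralBinom k0)^2 :=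
          Nat.mul_le_mul_right _ h1
      _ = (Nat.centralBinom k0)^2 * (3*k0+1) := by ring
      _ ≤ 16^k0 := centralsq k0
      _ = 4^(k0+k0) := by
          rw [show (16:ℕ) = 4^2 by norm_num, ← pow_mul]; congr 1; omega
  · subst hk0
    have hdiv : (2*k0 + 1) / 2 = k0 := by omega
    rw [hdiv]
    have hcent : Nat.centralBinom (k0+1) = 2 * ((2*k0+1).choose k0) := by
      rw [Nat.centralBinom]
      have e2 : 2*(k0+1) = (2*k0+1)+1 := by omega
      rw [e2, Nat.choose_succ_succ, Nat.choose_symm_half]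
      omega
    set C := (2*k0+1).choose k0 with hCdef
    have hsq := centralsq (k0+1)
    rw [hcent] at hsq
    have h1 : 4*n^2 ≤ 3*k0+4 := by nlinarith
    have key : 4 * (4*n^2 * C^2) ≤ 4 * (4 * 16^k0) := by
      calc 4 * (4*n^2 * C^2) = 4*C^2 * (4*n^2) := by ring
        _ ≤ 4*C^2 * (3*k0+4) := Nat.mul_le_mul_left _ h1
        _ = (2*C)^2 * (3*(k0+1)+1) := by ring
        _ ≤ 16^(k0+1) := hsq
        _ = 4 * (4 * 16^k0) := by ring
    have key2 : 4*n^2 * C^2 ≤ 4 * 16^k0 := Nat.le_of_mul_le_mul_left key (by norm_num)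
    calc 4*n^2 * C^2 ≤ 4 * 16^k0 := key2
      _ = 4^(2*k0+1) := by
          rw [show (16:ℕ) = 4^2 by norm_num, ← pow_mul, pow_succ]; ring

lemma binomPMF_nonneg {p : ℝ} (h0 : 0 ≤ p) (h1 : p ≤ 1) (n k : ℕ) :
    0 ≤ binomPMF n p k := by
  have h2 : (0:ℝ) ≤ 1 - p := by linarith
  unfold binomPMF
  positivity

lemma binomPMF_sum (n : ℕ) (p : ℝ) : ∑ j ∈ Finset.range (n+1), binomPMF n p j = 1 := by
  calc ∑ j ∈ Finset.range (n+1), binomPMF n p j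
      = ∑ j ∈ Finset.range (n+1), p^j * (1-p)^(n-j) * (n.choose j : ℝ) := by
        apply Finset.sum_congr rfl; intro j _; unfold binomPMF; ring
    _ = (p + (1-p))^n := (add_pow p (1-p) n).symm
    _ = 1 := by norm_num

lemma binomPMF_half_eq (m k : ℕ) (hk : k ≤ m) :
    binomPMF m (1/2) k = (m.choose k : ℝ) * (1/2)^m := by
  unfold binomPMF
  rw [show (1:ℝ) - 1/2 = 1/2 by norm_num, mul_assoc, ← pow_add, Nat.add_sub_cancel' hk]

lemma binomPMF_half_symm (m k : ℕ) (hk : k ≤ m) :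
    binomPMF m (1/2) (m - k) = binomPMF m (1/2) k := by
  rw [binomPMF_half_eq m (m-k) (by omega), binomPMF_half_eq m k hk, Nat.choose_symm hk]

lemma half_sum (m : ℕ) :
    (1:ℝ)/2 ≤ ∑ k ∈ Finset.range (m+1), if m ≤ 2*k then binomPMF m (1/2) k else 0 := by
  classical
  have hb0 : ∀ k, 0 ≤ binomPMF m (1/2) k :=
    binomPMF_nonneg (by norm_num) (by norm_num) m
  have htot : ∑ k ∈ Finset.range (m+1), binomPMF m (1/2) k = 1 := binomPMF_sum m (1/2)
  rw [← Finset.sum_filter]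
  set A := (Finset.range (m+1)).filter (fun k => m ≤ 2*k) with hA
  set B := (Finset.range (m+1)).filter (fun k => ¬ m ≤ 2*k) with hB
  have hsplit : ∑ k ∈ A, binomPMF m (1/2) k + ∑ k ∈ B, binomPMF m (1/2) k = 1 := by
    rw [hA, hB, Finset.sum_filter_add_sum_filter_not]; exact htot
  have hinj : ∀ x ∈ B, ∀ y ∈ B, m - x = m - y → x = y := by
    intro x hx y hy hxy
    rw [hB, Finset.mem_filter, Finset.mem_range] at hx hy
    omega
  have himg : ∑ k ∈ B.image (fun k => m - k), binomPMF m (1/2) k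
      = ∑ k ∈ B, binomPMF m (1/2) k := by
    rw [Finset.sum_image hinj]
    apply Finset.sum_congr rfl
    intro k hk
    rw [hB, Finset.mem_filter, Finset.mem_range] at hk
    exact binomPMF_half_symm m k (by omega)
  have hsub : B.image (fun k => m - k) ⊆ A := by
    intro x hx
    obtain ⟨k, hk, rfl⟩ := Finset.mem_image.1 hx
    rw [hB, Finset.mem_filter, Finset.mem_range] at hk
    rw [hA, Finset.mem_filter, Finset.mem_range]
    omega
  have hle : ∑ k ∈ B, binomPMF m (1/2) k ≤ ∑ k ∈ A, binomPMF m (1/2) k := by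
    rw [← himg]
    exact Finset.sum_le_sum_of_subset_of_nonneg hsub (fun i _ _ => hb0 i)
  linarith

lemma binomPMF_half_le (m n : ℕ) (hn : 1 ≤ n) (hm : 3*n^2 ≤ m) (k : ℕ) :
    binomPMF m (1/2) k ≤ 1/(2*n) := by
  have hn' : (0:ℝ) < 2*n := by positivity
  by_cases hk : k ≤ m
  · rw [binomPMF_half_eq m k hk]
    have hkey : 2*n*(m.choose (m/2)) ≤ 2^m := by
      have h := middle_sq m n hn hm
      have h2 : (2*n*(m.choose (m/2)))^2 ≤ (2^m)^2 := by
        calc (2*n*(m.choose (m/2)))^2 = 4*n^2*(m.choose (m/2))^2 := by ring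
          _ ≤ 4^m := h
          _ = (2^m)^2 := by
              rw [show (4:ℕ)=2^2 by norm_num, ← pow_mul, ← pow_mul, Nat.mul_comm]
      exact (Nat.pow_le_pow_iff_left (by norm_num)).1 h2
    have hcast : (2*(n:ℝ)) * (m.choose (m/2) : ℝ) ≤ 2^m := by exact_mod_cast hkey
    have h2m : (0:ℝ) < 2^m := by positivity
    have hmid : (m.choose k : ℝ) ≤ (m.choose (m/2) : ℝ) := by
      exact_mod_cast Nat.choose_le_middle k m
    calc (m.choose k : ℝ) * (1/2)^m ≤ (m.choose (m/2) : ℝ) * (1/2)^m := by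
          apply mul_le_mul_of_nonneg_right hmid (by positivity)
      _ = (m.choose (m/2) : ℝ) / 2^m := by rw [one_div_pow]; ring
      _ ≤ 1/(2*n) := by
          rw [div_le_div_iff₀ h2m hn']
          linarith
  · have hz : m.choose k = 0 := Nat.choose_eq_zero_of_lt (by omega)
    unfold binomPMF
    rw [hz]
    simp

/-- Theorem 4.3 of the paper: pooling lower bound in the agnostic
case.  For every `ε ∈ (0,1/2)` there is `n0` such that for all `n ≥ n0` and
`N ≥ 4n`, with `X` the number of wrong labels in the biased source and `Y` the
number of wrong labels in the `N−1` unbiased sources,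
`P(X + Y ≥ nN/2) ≥ 1/10`; consequently the pooled ERM (erring exactly on this
event, with excess risk `2ε` when it errs) has `E[E_D(ĥ_pool)] ≥ ε/5`. -/
theorem stmt7 (ε : ℝ) (hε0 : 0 < ε) (hε : ε < 1/2) :
    ∃ n0 : ℕ, ∀ n : ℕ, n0 ≤ n → ∀ N : ℕ, 4*n ≤ N →
      1/10 ≤ poolErrProb n N ε ∧ ε/5 ≤ 2*ε * poolErrProb n N ε := by
  classical
  refine ⟨2, fun n hn N hN => ?_⟩
  have hn1 : 1 ≤ n := by omega
  set m := (N-1)*n with hm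
  have hmn : m + n = n*N := by
    rw [hm]
    have h1 : N - 1 + 1 = N := by omega
    calc (N-1)*n + n = ((N-1)+1)*n := by ring
      _ = N*n := by rw [h1]
      _ = n*N := Nat.mul_comm _ _
  have hm3 : 3*n^2 ≤ m := by
    rw [hm]
    calc 3*n^2 = (3*n)*n := by ring
      _ ≤ (N-1)*n := Nat.mul_le_mul_right _ (by omega)
  have hp0 : (0:ℝ) ≤ 1/2 - ε := by linarith
  have hp1 : (1:ℝ)/2 - ε ≤ 1 := by linarith
  have ha0 : ∀ j, 0 ≤ binomPMF n (1/2 - ε) j := binomPMF_nonneg hp0 hp1 n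
  have hb0 : ∀ k, 0 ≤ binomPMF m (1/2) k := binomPMF_nonneg (by norm_num) (by norm_num) m
  set S := ∑ k ∈ Finset.range (m+1), if m + n ≤ 2*k then binomPMF m (1/2) k else 0 with hS
  have hSle : S ≤ poolErrProb n N ε := by
    rw [poolErrProb, ← hm]
    simp only [← hmn]
    have hterm : ∀ j ∈ Finset.range (n+1),
        binomPMF n (1/2 - ε) j * S ≤ ∑ k ∈ Finset.range (m+1),
          if m + n ≤ 2*(j+k) then binomPMF n (1/2 - ε) j * binomPMF m (1/2) k else 0 := by
      intro j _
      rw [hS, Finset.mul_sum]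
      apply Finset.sum_le_sum
      intro k _
      rw [mul_ite, mul_zero]
      by_cases h1 : m + n ≤ 2*k
      · rw [if_pos h1, if_pos (by omega)]
      · rw [if_neg h1]
        split_ifs with h2
        · exact mul_nonneg (ha0 j) (hb0 k)
        · exact le_refl _
    calc S = (∑ j ∈ Finset.range (n+1), binomPMF n (1/2 - ε) j) * S := by
          rw [binomPMF_sum, one_mul]
      _ = ∑ j ∈ Finset.range (n+1), binomPMF n (1/2 - ε) j * S := by rw [Finset.sum_mul]
      _ ≤ _ := Finset.sum_le_sum hterm
  have hhalf := half_sum m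
  have hdecomp : (∑ k ∈ Finset.range (m+1), if m ≤ 2*k then binomPMF m (1/2) k else 0)
      = S + ∑ k ∈ Finset.range (m+1),
          if m ≤ 2*k ∧ 2*k < m + n then binomPMF m (1/2) k else 0 := by
    rw [hS, ← Finset.sum_add_distrib]
    apply Finset.sum_congr rfl
    intro k _
    by_cases h1 : m + n ≤ 2*k
    · rw [if_pos (by omega), if_pos h1, if_neg (by omega), add_zero]
    · by_cases h2 : m ≤ 2*k
      · rw [if_pos h2, if_neg h1, if_pos ⟨h2, by omega⟩, zero_add]
      · rw [if_neg h2, if_neg (by omega), if_neg (fun hc => h2 hc.1), add_zero]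
  have hbad : (∑ k ∈ Finset.range (m+1),
      if m ≤ 2*k ∧ 2*k < m + n then binomPMF m (1/2) k else 0) ≤ 2/5 := by
    rw [← Finset.sum_filter]
    set E := (Finset.range (m+1)).filter (fun k => m ≤ 2*k ∧ 2*k < m+n) with hE
    have hcard : E.card ≤ (n+1)/2 := by
      have hsub : E ⊆ Finset.Ico ((m+1)/2) ((m+n+1)/2) := by
        intro k hk
        rw [hE, Finset.mem_filter, Finset.mem_range] at hk
        rw [Finset.mem_Ico]
        omega
      calc E.card ≤ (Finset.Ico ((m+1)/2) ((m+n+1)/2)).card := Finset.card_le_card hsub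
        _ = (m+n+1)/2 - (m+1)/2 := Nat.card_Ico _ _
        _ ≤ (n+1)/2 := by omega
    have hsumE : ∑ k ∈ E, binomPMF m (1/2) k ≤ E.card • (1/(2*(n:ℝ))) :=
      Finset.sum_le_card_nsmul E _ _ (fun k _ => binomPMF_half_le m n hn1 hm3 k)
    have hnn : (2:ℝ) ≤ (n:ℝ) := by exact_mod_cast hn
    have hcast : ((E.card : ℝ)) ≤ ((n:ℝ)+1)/2 := by
      calc (E.card : ℝ) ≤ (((n+1)/2 : ℕ) : ℝ) := by exact_mod_cast hcard
        _ ≤ ((n+1 : ℕ) : ℝ)/2 := Nat.cast_div_le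
        _ = ((n:ℝ)+1)/2 := by push_cast; ring
    calc ∑ k ∈ E, binomPMF m (1/2) k ≤ E.card • (1/(2*(n:ℝ))) := hsumE
      _ = (E.card : ℝ) * (1/(2*(n:ℝ))) := by rw [nsmul_eq_mul]
      _ ≤ (((n:ℝ)+1)/2) * (1/(2*(n:ℝ))) := by
          apply mul_le_mul_of_nonneg_right hcast (by positivity)
      _ = ((n:ℝ)+1)/(2*(2*(n:ℝ))) := by rw [div_mul_div_comm, mul_one]
      _ ≤ 2/5 := by
          rw [div_le_div_iff₀ (by positivity) (by norm_num)]
          linarith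
  have hmain : 1/10 ≤ poolErrProb n N ε := by
    have hSge : (1:ℝ)/10 ≤ S := by linarith
    linarith
  refine ⟨hmain, ?_⟩
  have h2 : 2*ε*(1/10) ≤ 2*ε*poolErrProb n N ε :=
    mul_le_mul_of_nonneg_left hmain (by linarith)
  linarith
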